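/- The total mechanical power splits across the task and null-space ports: for any τ, q̇ ∈ ℝⁿ, setting σ = (J_M^#)ᵀ τ, τ₀ = Z τ, η = J q̇, and ν = N q̇ (with N = (Z M Zᵀ)⁻¹ Z M), one has σᵀ η + τ₀ᵀ ν = τᵀ q̇. -/

import Mathlib

/-!
`J_M^#` is a right inverse of `J`, while `N = (Z M Zᵀ)⁻¹ Z M` is a left inverse of `Zᵀ` that
kills `J_M^#` (because `Z Jᵀ = 0`). Since `ker J = range Zᵀ` by counting dimensions, any `u`
splits as `u = J_M^# J u + Zᵀ y`, and applying `N` gives `y = N u`; hence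
`J_M^# J + Zᵀ N = 1`. Transposing, `σᵀ η + τ₀ᵀ ν = τᵀ (J_M^# J + Zᵀ N) q̇ = τᵀ q̇`.
-/

open Matrix

/-- The dynamically consistent pseudoinverse `J_M^# = M⁻¹ Jᵀ (J M⁻¹ Jᵀ)⁻¹`. -/
noncomputable def dynConsistentPseudoinverse {n m : ℕ}
    (M : Matrix (Fin n) (Fin n) ℝ) (J : Matrix (Fin m) (Fin n) ℝ) :
    Matrix (Fin n) (Fin m) ℝ :=
  M⁻¹ * Jᵀ * (J * M⁻¹ * Jᵀ)⁻¹

namespace Matrix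

section Field

variable {K : Type*} [Field K] {m n p : Type*} [Fintype n]

theorem vecMul_injective_of_rank_eq_card [Fintype m] {A : Matrix m n K}
    (hA : A.rank = Fintype.card m) : Function.Injective A.vecMul := by
  rw [vecMul_injective_iff, linearIndependent_iff_card_eq_finrank_span, ← hA,
    rank_eq_finrank_span_row]
  rfl

theorem ker_mulVecLin_eq_range_mulVecLin_transpose [Fintype p] {A : Matrix m n K}
    {B : Matrix p n K} (hAB : A * Bᵀ = 0) (hrank : A.rank + B.rank = Fintype.card n) :
    LinearMap.ker A.mulVecLin = LinearMap.range Bᵀ.mulVecLin := by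
  symm
  apply Submodule.eq_of_le_of_finrank_eq
  · rintro _ ⟨y, rfl⟩
    simp only [LinearMap.mem_ker, mulVecLin_apply, mulVec_mulVec, hAB, zero_mulVec]
  · have := A.mulVecLin.finrank_range_add_finrank_ker
    rw [Module.finrank_fintype_fun_eq_card] at this
    have hA : Module.finrank K (LinearMap.range A.mulVecLin) = A.rank := rfl
    have hB : Module.finrank K (LinearMap.range Bᵀ.mulVecLin) = B.rank := rank_transpose B
    omega

end Field

theorem PosDef.mul_mul_transpose_of_rank_eq_card {m n : Type*} [Fintype m] [Fintype n]
    {A : Matrix n n ℝ} (hA : A.PosDef) {B : Matrix m n ℝ} (hB : B.rank = Fintype.card m) :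
    (B * A * Bᵀ).PosDef := by
  simpa using hA.mul_mul_conjTranspose_same (vecMul_injective_of_rank_eq_card hB)

theorem mul_add_mul_eq_one_of_ker_le_range {R : Type*} [CommRing R] {m n p : Type*}
    [Fintype m] [Fintype n] [Fintype p] [DecidableEq m] [DecidableEq n] [DecidableEq p]
    {J : Matrix m n R} {A : Matrix n m R} {B : Matrix n p R} {N : Matrix p n R}
    (hJA : J * A = 1) (hNB : N * B = 1) (hNA : N * A = 0)
    (hker : LinearMap.ker J.mulVecLin ≤ LinearMap.range B.mulVecLin) :
    A * J + B * N = 1 := by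
  refine ext_iff_mulVec.mpr fun u => ?_
  obtain ⟨y, hy⟩ : u - A *ᵥ J *ᵥ u ∈ LinearMap.range B.mulVecLin := hker <| by
    simp only [LinearMap.mem_ker, mulVecLin_apply, mulVec_sub, mulVec_mulVec, ← Matrix.mul_assoc,
      hJA, Matrix.one_mul, sub_self]
  rw [mulVecLin_apply] at hy
  have hNu : N *ᵥ u = y := by
    have := congrArg (N *ᵥ ·) hy
    simpa only [mulVec_mulVec, hNB, one_mulVec, mulVec_sub, ← Matrix.mul_assoc, hNA,
      Matrix.zero_mul, zero_mulVec, sub_zero] using this.symm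
  rw [add_mulVec, one_mulVec, ← mulVec_mulVec, ← mulVec_mulVec, hNu, hy, add_sub_cancel]

end Matrix

theorem dynConsistentPseudoinverse_mul_add_transpose_mul_eq_one {n m : ℕ} (hmn : m ≤ n)
    {M : Matrix (Fin n) (Fin n) ℝ} {J : Matrix (Fin m) (Fin n) ℝ}
    {Z : Matrix (Fin (n - m)) (Fin n) ℝ} (hM : M.PosDef) (hJ : J.rank = m)
    (hZ : Z.rank = n - m) (hJZ : J * Zᵀ = 0) :
    dynConsistentPseudoinverse M J * J + Zᵀ * ((Z * M * Zᵀ)⁻¹ * Z * M) = 1 := by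
  have hG : (J * M⁻¹ * Jᵀ).PosDef := hM.inv.mul_mul_transpose_of_rank_eq_card (by simpa using hJ)
  have hW : (Z * M * Zᵀ).PosDef := hM.mul_mul_transpose_of_rank_eq_card (by simpa using hZ)
  have hZJ : Z * Jᵀ = 0 := by simpa using congrArg transpose hJZ
  apply mul_add_mul_eq_one_of_ker_le_range
  · simp only [dynConsistentPseudoinverse, ← Matrix.mul_assoc]
    exact mul_nonsing_inv _ hG.det_pos.ne'.isUnit
  · simpa only [Matrix.mul_assoc] using nonsing_inv_mul _ hW.det_pos.ne'.isUnit
  · simp only [dynConsistentPseudoinverse, ← Matrix.mul_assoc]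
    rw [Matrix.mul_assoc _ M, mul_nonsing_inv M hM.det_pos.ne'.isUnit, Matrix.mul_one,
      Matrix.mul_assoc _ Z, hZJ, Matrix.mul_zero, Matrix.zero_mul]
  · rw [ker_mulVecLin_eq_range_mulVecLin_transpose hJZ (by rw [Fintype.card_fin]; omega)]

/-- The total mechanical power splits across the task and
null-space ports: with `σ = (J_M^#)ᵀ τ`, `τ₀ = Z τ`, `η = J q̇` and
`ν = N q̇` (where `N = (Z M Zᵀ)⁻¹ Z M`), one has `σᵀ η + τ₀ᵀ ν = τᵀ q̇`. -/
theorem power_port_split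
    {n m : ℕ} (hmn : m ≤ n)
    (M : Matrix (Fin n) (Fin n) ℝ) (J : Matrix (Fin m) (Fin n) ℝ)
    (Z : Matrix (Fin (n - m)) (Fin n) ℝ)
    (hM : M.PosDef) (hJ : J.rank = m)
    (hZ : Z.rank = n - m) (hJZ : J * Zᵀ = 0)
    (τ qdot : Fin n → ℝ)
    (σ : Fin m → ℝ) (τ₀ : Fin (n - m) → ℝ)
    (η : Fin m → ℝ) (ν : Fin (n - m) → ℝ)
    (hσ : σ = (dynConsistentPseudoinverse M J)ᵀ.mulVec τ)
    (hτ₀ : τ₀ = Z.mulVec τ)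
    (hη : η = J.mulVec qdot)
    (hν : ν = ((Z * M * Zᵀ)⁻¹ * Z * M).mulVec qdot) :
    σ ⬝ᵥ η + τ₀ ⬝ᵥ ν = τ ⬝ᵥ qdot := by
  have hση : σ ⬝ᵥ η = τ ⬝ᵥ ((dynConsistentPseudoinverse M J * J) *ᵥ qdot) := by
    rw [hσ, hη, mulVec_transpose, ← dotProduct_mulVec, mulVec_mulVec]
  have hτν : τ₀ ⬝ᵥ ν = τ ⬝ᵥ ((Zᵀ * ((Z * M * Zᵀ)⁻¹ * Z * M)) *ᵥ qdot) := by
    rw [hτ₀, hν, ← vecMul_transpose, ← dotProduct_mulVec, mulVec_mulVec]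
  rw [hση, hτν, ← dotProduct_add, ← add_mulVec,
    dynConsistentPseudoinverse_mul_add_transpose_mul_eq_one hmn hM hJ hZ hJZ, one_mulVec]
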